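/- The index of the Selmer group Sel(A/K) = lim→ Sel_n(A/K) in H^1_{TT}(K, A_tor) = lim→ H^1_{TT}(K, A[n]) divides the product ∏_v c_{A,v} of the Tamagawa numbers of A over all finite primes v of K. -/
import Mathlib

open DirectSum

theorem selmer_index_divides_product_of_tamagawa_numbers
    (ι : Type)
    -- H¹_TT(K, A_tor)
    (H1TT : Type) [AddCommGroup H1TT]
    -- the groups TT(A/K_v) of Tamagawa torsors and the Tamagawa numbers c_{A,v}
    (TT : ι → Type) [∀ v, AddCommGroup (TT v)] [∀ v, Finite (TT v)]
    (c : ι → ℕ) (hc : ∀ v, Nat.card (TT v) = c v)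
    -- almost all Tamagawa numbers are 1
    (hfin : (Function.mulSupport c).Finite)
    -- the canonical map H¹_TT(K, A_tor) → ⊕_v TT(A/K_v); Sel(A/K) is its kernel
    (ψ : H1TT →+ ⨁ v, TT v) :
    (ψ.ker).index ∣ ∏ᶠ v, c v := by
  classical
  set S : Finset ι := hfin.toFinset with hS
  -- outside S each TT v is trivial
  have htriv : ∀ v ∉ S, Subsingleton (TT v) := by
    intro v hv
    have : c v = 1 := by
      by_contra h
      exact hv (hfin.mem_toFinset.mpr h)
    have : Nat.card (TT v) = 1 := (hc v).trans this
    exact Nat.card_eq_one_iff_unique.mp this |>.1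
  -- the evaluation map into the finite product over S
  let φ : (⨁ v, TT v) →+ (∀ v : S, TT v) :=
    { toFun := fun x v => x v
      map_zero' := by ext v; simp
      map_add' := by intro x y; ext v; simp }
  have hφinj : Function.Injective φ := by
    intro x y hxy
    refine DFinsupp.ext fun v => ?_
    by_cases hv : v ∈ S
    · exact congrFun hxy ⟨v, hv⟩
    · have := htriv v hv
      exact Subsingleton.elim _ _
  have hfinpi : Finite (∀ v : S, TT v) := by infer_instance
  have hfinDS : Finite (⨁ v, TT v) := Finite.of_injective φ hφinj
  -- index of kernel = card of range
  rw [AddSubgroup.index_ker]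
  have h1 : Nat.card ψ.range ∣ Nat.card (⨁ v, TT v) :=
    AddSubgroup.card_addSubgroup_dvd_card ψ.range
  have h2 : Nat.card (⨁ v, TT v) ∣ Nat.card (∀ v : S, TT v) := by
    have := AddSubgroup.card_addSubgroup_dvd_card φ.range
    have heq : Nat.card (⨁ v, TT v) = Nat.card φ.range :=
      Nat.card_eq_of_bijective _ (AddMonoidHom.ofInjective hφinj).bijective
    rwa [← heq] at this
  have h3 : Nat.card (∀ v : S, TT v) = ∏ᶠ v, c v := by
    rw [Nat.card_pi]
    have : ∏ᶠ v, c v = ∏ v ∈ S, c v :=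
      finprod_eq_prod_of_mulSupport_subset c (by rw [hS, Set.Finite.coe_toFinset])
    rw [this, ← Finset.prod_attach S (fun v => c v)]
    exact Finset.prod_congr rfl fun v _ => hc v
  exact h3 ▸ h1.trans h2
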